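/- arXiv:2208.14656 — 3 statements merged into one kernel-verified Lean document; each statement's English description precedes it below -/
import Mathlib

section
/- (Quantitative semantics of until: positive robustness yields satisfaction of until.) Let g₁, g₂ : ℝ → ℝ and t, a, b : ℝ, and suppose that for every t' : ℝ the set g₁ '' Set.Icc t t' is bounded below. If sSup { x : ℝ | ∃ t' ∈ Set.Icc (t+a) (t+b), x = min (g₂ t') (sInf (g₁ '' Set.Icc t t')) } > 0, then there exists t' ∈ Set.Icc (t+a) (t+b) such that g₂ t' > 0 and g₁ t'' > 0 for every t'' ∈ Set.Icc t t'. -/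
-- `0 ≤ c` is needed because `sSup ∅ = 0`; without it `s` could be empty.
theorem Real.exists_lt_of_lt_sSup {s : Set ℝ} {c : ℝ} (hc : 0 ≤ c) (h : c < sSup s) :
    ∃ x ∈ s, c < x := by
  by_contra! hs
  exact h.not_ge (Real.sSup_le hs hc)

/-- Quantitative semantics of until: positive robustness yields satisfaction
of until. -/
theorem until_robust (g₁ g₂ : ℝ → ℝ) (t a b : ℝ)
    (hbd : ∀ t' : ℝ, BddBelow (g₁ '' Set.Icc t t'))
    (h : sSup {x : ℝ | ∃ t' ∈ Set.Icc (t + a) (t + b),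
          x = min (g₂ t') (sInf (g₁ '' Set.Icc t t'))} > 0) :
    ∃ t' ∈ Set.Icc (t + a) (t + b), g₂ t' > 0 ∧
      ∀ t'' ∈ Set.Icc t t', g₁ t'' > 0 := by
  obtain ⟨_, ⟨t', ht', rfl⟩, hpos⟩ := Real.exists_lt_of_lt_sSup le_rfl h
  obtain ⟨hg₂, hg₁⟩ := lt_min_iff.mp hpos
  exact ⟨t', ht', hg₂, fun t'' ht'' => hg₁.trans_le (csInf_le (hbd t') ⟨t'', ht'', rfl⟩)⟩
end

section
/- (Soundness of the quantitative semantics.) For every quantitative STL formula φ over S, every trace π : ℕ → S, and every time t : ℕ: if ρ(φ,π,t) > 0 then (π,t) ⊨ φ. -/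
/-- Quantitative STL formulas over a type `S` of scenes: atoms carry a
real-valued function, and the bounded temporal operators carry bounds
`a b : ℕ` together with a proof that `a ≤ b`. -/
inductive QSTL (S : Type) : Type where
  | atom : (S → ℝ) → QSTL S
  | neg : QSTL S → QSTL S
  | conj : QSTL S → QSTL S → QSTL S
  | disj : QSTL S → QSTL S → QSTL S
  | untl : (a b : ℕ) → a ≤ b → QSTL S → QSTL S → QSTL S
  | always : (a b : ℕ) → a ≤ b → QSTL S → QSTL S
  | eventually : (a b : ℕ) → a ≤ b → QSTL S → QSTL S
  | next : QSTL S → QSTL S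

/-- Satisfaction `(π, t) ⊨ φ`. -/
def QSTL.Sat {S : Type} (π : ℕ → S) : ℕ → QSTL S → Prop
  | t, .atom g => g (π t) > 0
  | t, .neg φ => ¬ QSTL.Sat π t φ
  | t, .conj φ ψ => QSTL.Sat π t φ ∧ QSTL.Sat π t ψ
  | t, .disj φ ψ => QSTL.Sat π t φ ∨ QSTL.Sat π t ψ
  | t, .untl a b _ φ ψ =>
      ∃ t', t + a ≤ t' ∧ t' ≤ t + b ∧ QSTL.Sat π t' ψ ∧
        ∀ t'', t ≤ t'' → t'' ≤ t' → QSTL.Sat π t'' φ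
  | t, .always a b _ φ => ∀ t', t + a ≤ t' → t' ≤ t + b → QSTL.Sat π t' φ
  | t, .eventually a b _ φ => ∃ t', t + a ≤ t' ∧ t' ≤ t + b ∧ QSTL.Sat π t' φ
  | t, .next φ => QSTL.Sat π (t + 1) φ

/-- The robustness `ρ(φ, π, t)` of the quantitative semantics. -/
def QSTL.rho {S : Type} (π : ℕ → S) : QSTL S → ℕ → ℝ
  | .atom g, t => g (π t)
  | .neg φ, t => - QSTL.rho π φ t
  | .conj φ ψ, t => min (QSTL.rho π φ t) (QSTL.rho π ψ t)
  | .disj φ ψ, t => max (QSTL.rho π φ t) (QSTL.rho π ψ t)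
  | .untl a b h φ ψ, t =>
      (Finset.Icc (t + a) (t + b)).attach.sup'
        (Finset.attach_nonempty_iff.mpr
          (Finset.nonempty_Icc.mpr (Nat.add_le_add_left h t)))
        (fun t' => min (QSTL.rho π ψ t'.1)
          ((Finset.Icc t t'.1).inf'
            (Finset.nonempty_Icc.mpr
              (le_trans (Nat.le_add_right t a) (Finset.mem_Icc.mp t'.2).1))
            (fun t'' => QSTL.rho π φ t'')))
  | .always a b h φ, t =>
      (Finset.Icc (t + a) (t + b)).inf'
        (Finset.nonempty_Icc.mpr (Nat.add_le_add_left h t))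
        (fun t' => QSTL.rho π φ t')
  | .eventually a b h φ, t =>
      (Finset.Icc (t + a) (t + b)).sup'
        (Finset.nonempty_Icc.mpr (Nat.add_le_add_left h t))
        (fun t' => QSTL.rho π φ t')
  | .next φ, t => QSTL.rho π φ (t + 1)

/- Negation swaps the two halves, so soundness of robustness is proved by induction together
with its dual: negative robustness refutes satisfaction. -/
def SignAgrees {α : Type*} [Zero α] [LT α] (r : α) (p : Prop) : Prop :=
  (0 < r → p) ∧ (r < 0 → ¬p)

namespace SignAgrees

variable {α ι : Type*} {r s : α} {p q : Prop}

theorem of_iff [Zero α] [LT α] (h : SignAgrees r p) (hpq : p ↔ q) : SignAgrees r q :=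
  ⟨fun hr => hpq.1 (h.1 hr), fun hr => mt hpq.2 (h.2 hr)⟩

theorem neg [AddGroup α] [LinearOrder α] [AddLeftStrictMono α] (h : SignAgrees r p) :
    SignAgrees (-r) (¬p) :=
  ⟨fun hr => h.2 (neg_pos.mp hr), fun hr => not_not_intro (h.1 (neg_lt_zero.mp hr))⟩

variable [Zero α] [LinearOrder α]

theorem min (hp : SignAgrees r p) (hq : SignAgrees s q) : SignAgrees (min r s) (p ∧ q) :=
  ⟨fun h => ⟨hp.1 (lt_min_iff.mp h).1, hq.1 (lt_min_iff.mp h).2⟩,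
    fun h hpq => (min_lt_iff.mp h).elim (hp.2 · hpq.1) (hq.2 · hpq.2)⟩

theorem max (hp : SignAgrees r p) (hq : SignAgrees s q) : SignAgrees (max r s) (p ∨ q) :=
  ⟨fun h => (lt_max_iff.mp h).imp hp.1 hq.1,
    fun h hpq => hpq.elim (hp.2 (max_lt_iff.mp h).1) (hq.2 (max_lt_iff.mp h).2)⟩

theorem finset_inf' {t : Finset ι} (ht : t.Nonempty) {f : ι → α} {P : ι → Prop}
    (h : ∀ i ∈ t, SignAgrees (f i) (P i)) : SignAgrees (t.inf' ht f) (∀ i ∈ t, P i) := by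
  refine ⟨fun hpos i hi => (h i hi).1 ((Finset.lt_inf'_iff ht).mp hpos i hi), fun hneg hP => ?_⟩
  obtain ⟨i, hi, hfi⟩ := (Finset.inf'_lt_iff ht).mp hneg
  exact (h i hi).2 hfi (hP i hi)

theorem finset_sup' {t : Finset ι} (ht : t.Nonempty) {f : ι → α} {P : ι → Prop}
    (h : ∀ i ∈ t, SignAgrees (f i) (P i)) : SignAgrees (t.sup' ht f) (∃ i ∈ t, P i) := by
  refine ⟨fun hpos => ?_, fun hneg ⟨i, hi, hPi⟩ =>
    (h i hi).2 ((Finset.sup'_lt_iff ht).mp hneg i hi) hPi⟩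
  obtain ⟨i, hi, hfi⟩ := (Finset.lt_sup'_iff ht).mp hpos
  exact ⟨i, hi, (h i hi).1 hfi⟩

end SignAgrees

namespace QSTL

theorem signAgrees_rho_sat {S : Type} (π : ℕ → S) (φ : QSTL S) (t : ℕ) :
    SignAgrees (rho π φ t) (Sat π t φ) := by
  induction φ generalizing t with
  | atom g => exact ⟨id, fun h hg => lt_asymm h hg⟩
  | neg φ ih => exact (ih t).neg
  | conj φ ψ ihφ ihψ => exact (ihφ t).min (ihψ t)
  | disj φ ψ ihφ ihψ => exact (ihφ t).max (ihψ t)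
  | untl _ _ _ φ ψ ihφ ihψ =>
    refine (SignAgrees.finset_sup' _ fun t' _ =>
      (ihψ t'.1).min (SignAgrees.finset_inf' _ fun t'' _ => ihφ t'')).of_iff ?_
    simp only [Sat, Finset.mem_attach, Finset.mem_Icc, true_and, Subtype.exists,
      exists_prop, and_imp, and_assoc]
  | always _ _ _ φ ih =>
    exact (SignAgrees.finset_inf' _ fun t' _ => ih t').of_iff (by simp [Sat])
  | eventually _ _ _ φ ih =>
    exact (SignAgrees.finset_sup' _ fun t' _ => ih t').of_iff (by simp [Sat, and_assoc])
  | next φ ih => exact ih (t + 1)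

end QSTL

/-- Soundness of the quantitative semantics: strictly positive robustness
implies satisfaction. -/
theorem rho_sound {S : Type} (φ : QSTL S) (π : ℕ → S) (t : ℕ)
    (h : QSTL.rho π φ t > 0) : QSTL.Sat π t φ :=
  (QSTL.signAgrees_rho_sat π φ t).1 h
end

section
/- (Completeness direction of the quantitative semantics.) For every quantitative STL formula φ over S, every trace π : ℕ → S, and every time t : ℕ: if (π,t) ⊨ φ then ρ(φ,π,t) ≥ 0. -/
namespace QSTL

variable {S : Type} (π : ℕ → S)

theorem rho_untl_nonneg_of_sat {a b : ℕ} (hab : a ≤ b) {φ ψ : QSTL S} {t : ℕ}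
    (hφ : ∀ t, Sat π t φ → 0 ≤ rho π φ t)
    (hψ : ∀ t, Sat π t ψ → 0 ≤ rho π ψ t)
    (h : Sat π t (untl a b hab φ ψ)) : 0 ≤ rho π (untl a b hab φ ψ) t := by
  obtain ⟨t', hat', ht'b, hψt', hφ_before⟩ := h
  rw [rho]
  refine Finset.le_sup'_of_le _ (b := ⟨t', Finset.mem_Icc.mpr ⟨hat', ht'b⟩⟩)
    (Finset.mem_attach _ _) (le_min (hψ t' hψt') (Finset.le_inf' _ _ fun t'' ht'' => ?_))
  obtain ⟨htt'', ht''t'⟩ := Finset.mem_Icc.mp ht''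
  exact hφ t'' (hφ_before t'' htt'' ht''t')

theorem rho_untl_nonpos_of_not_sat {a b : ℕ} (hab : a ≤ b) {φ ψ : QSTL S} {t : ℕ}
    (hφ : ∀ t, ¬ Sat π t φ → rho π φ t ≤ 0)
    (hψ : ∀ t, ¬ Sat π t ψ → rho π ψ t ≤ 0)
    (h : ¬ Sat π t (untl a b hab φ ψ)) : rho π (untl a b hab φ ψ) t ≤ 0 := by
  rw [rho]
  refine Finset.sup'_le _ _ fun ⟨t', ht'⟩ _ => ?_
  obtain ⟨hat', ht'b⟩ := Finset.mem_Icc.mp ht'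
  by_cases hψt' : Sat π t' ψ
  · obtain ⟨t'', htt'', ht''t', hφt''⟩ :
        ∃ t'', t ≤ t'' ∧ t'' ≤ t' ∧ ¬ Sat π t'' φ := by
      by_contra! hφ_before
      exact h ⟨t', hat', ht'b, hψt', hφ_before⟩
    exact min_le_of_right_le
      (Finset.inf'_le_of_le _ (Finset.mem_Icc.mpr ⟨htt'', ht''t'⟩) (hφ t'' hφt''))
  · exact min_le_of_left_le (hψ t' hψt')

/-- Negation swaps the two halves, so they must be proved together. -/
theorem rho_nonneg_of_sat_and_rho_nonpos_of_not_sat (φ : QSTL S) :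
    (∀ t, Sat π t φ → 0 ≤ rho π φ t) ∧ (∀ t, ¬ Sat π t φ → rho π φ t ≤ 0) := by
  induction φ with
  | atom g => exact ⟨fun _ h => h.le, fun _ h => not_lt.mp h⟩
  | neg φ ih =>
    exact ⟨fun t h => neg_nonneg.mpr (ih.2 t h),
      fun t h => neg_nonpos.mpr (ih.1 t (not_not.mp h))⟩
  | conj φ ψ ih₁ ih₂ =>
    refine ⟨fun t h => le_min (ih₁.1 t h.1) (ih₂.1 t h.2), fun t h => ?_⟩
    rcases not_and_or.mp h with h | h
    · exact min_le_of_left_le (ih₁.2 t h)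
    · exact min_le_of_right_le (ih₂.2 t h)
  | disj φ ψ ih₁ ih₂ =>
    refine ⟨fun t h => ?_,
      fun t h => max_le (ih₁.2 t (h ∘ Or.inl)) (ih₂.2 t (h ∘ Or.inr))⟩
    rcases h with h | h
    · exact le_max_of_le_left (ih₁.1 t h)
    · exact le_max_of_le_right (ih₂.1 t h)
  | untl a b hab φ ψ ih₁ ih₂ =>
    exact ⟨fun _ => rho_untl_nonneg_of_sat π hab ih₁.1 ih₂.1,
      fun _ => rho_untl_nonpos_of_not_sat π hab ih₁.2 ih₂.2⟩
  | always a b hab φ ih =>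
    refine ⟨fun t h => Finset.le_inf' _ _ fun t' ht' => ?_, fun t h => ?_⟩
    · exact ih.1 t' (h t' (Finset.mem_Icc.mp ht').1 (Finset.mem_Icc.mp ht').2)
    · obtain ⟨t', hat', ht'b, hφt'⟩ :
          ∃ t', t + a ≤ t' ∧ t' ≤ t + b ∧ ¬ Sat π t' φ := by
        by_contra! hall
        exact h hall
      exact Finset.inf'_le_of_le _ (Finset.mem_Icc.mpr ⟨hat', ht'b⟩) (ih.2 t' hφt')
  | eventually a b hab φ ih =>
    refine ⟨fun t ⟨t', hat', ht'b, hφt'⟩ => ?_,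
      fun t h => Finset.sup'_le _ _ fun t' ht' => ?_⟩
    · exact Finset.le_sup'_of_le _ (Finset.mem_Icc.mpr ⟨hat', ht'b⟩) (ih.1 t' hφt')
    · obtain ⟨hat', ht'b⟩ := Finset.mem_Icc.mp ht'
      exact ih.2 t' fun hφt' => h ⟨t', hat', ht'b, hφt'⟩
  | next φ ih => exact ⟨fun t => ih.1 (t + 1), fun t => ih.2 (t + 1)⟩

end QSTL

/-- Completeness direction of the quantitative semantics: satisfaction implies
nonnegative robustness. -/
theorem rho_complete {S : Type} (φ : QSTL S) (π : ℕ → S) (t : ℕ)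
    (h : QSTL.Sat π t φ) : QSTL.rho π φ t ≥ 0 :=
  (QSTL.rho_nonneg_of_sat_and_rho_nonpos_of_not_sat π φ).1 t h
end
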